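/- arXiv:2209.01799 — 4 statements merged into one kernel-verified Lean document; each statement's English description precedes it below -/
import Mathlib

section
/- (Proposition 1, part 1) For every n ≥ 1, every element of SA(n) other than S⁽ⁿ⁾S⁽ⁿ⁻¹⁾⋯S⁽¹⁾ has exactly 2^(n−1) entries equal to −1 and exactly 2^(n−1) entries equal to 1. -/
/-! Every row of `S⁽ᵏ⁾` and `A⁽ᵏ⁾` has a single nonzero entry, equal to `±1`, so every element of
`SA(n)` is a `±1` vector. Every column of `A⁽ᵏ⁾` sums to `0` (and every column of `S⁽ᵏ⁾` to `2`),
so the entries of `F⁽ⁿ⁾ ⋯ F⁽¹⁾` sum to `0` as soon as one factor is an `A⁽ᵏ⁾`. A `±1` vector of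
length `2ⁿ` with zero sum has `2ⁿ⁻¹` entries of each sign. -/

noncomputable def Smat (k : ℕ) : Matrix (Fin (2 ^ (k + 1))) (Fin (2 ^ k)) ℝ :=
  Matrix.of fun i j =>
    if (i : ℕ) < 2 ^ k then (if (i : ℕ) = (j : ℕ) then 1 else 0)
    else (if (i : ℕ) + (j : ℕ) = 2 ^ (k + 1) - 1 then 1 else 0)

noncomputable def Amat (k : ℕ) : Matrix (Fin (2 ^ (k + 1))) (Fin (2 ^ k)) ℝ :=
  Matrix.of fun i j =>
    if (i : ℕ) < 2 ^ k then (if (i : ℕ) = (j : ℕ) then -1 else 0)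
    else (if (i : ℕ) + (j : ℕ) = 2 ^ (k + 1) - 1 then 1 else 0)

noncomputable def Fmat (b : Bool) (k : ℕ) : Matrix (Fin (2 ^ (k + 1))) (Fin (2 ^ k)) ℝ :=
  if b then Amat k else Smat k

noncomputable def prodVec : (n : ℕ) → (Fin n → Bool) → (Fin (2 ^ n) → ℝ)
  | 0, _ => fun _ => 1
  | n + 1, c => (Fmat (c (Fin.last n)) n).mulVec (prodVec n fun i => c i.castSucc)

def SA (n : ℕ) : Set (Fin (2 ^ n) → ℝ) := { v | ∃ c : Fin n → Bool, v = prodVec n c }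

open Matrix

lemma Matrix.sum_mulVec_of_sum_col_eq {m n R : Type*} [Fintype m] [Fintype n] [CommSemiring R]
    (M : Matrix m n R) {c : R} (hM : ∀ j, ∑ i, M i j = c) (w : n → R) :
    ∑ i, (M *ᵥ w) i = c * ∑ j, w j := by
  simp only [mulVec, dotProduct]
  rw [Finset.sum_comm, Finset.mul_sum]
  simp only [← Finset.sum_mul, hM]

lemma two_mul_ncard_eq_one_of_sum_eq_zero {ι : Type*} [Fintype ι] {v : ι → ℝ}
    (hv : ∀ i, v i = 1 ∨ v i = -1) (hsum : ∑ i, v i = 0) :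
    2 * {i | v i = 1}.ncard = Fintype.card ι := by
  classical
  have hv_ite : ∀ i, v i = 2 * (if v i = 1 then 1 else 0) - 1 := fun i => by
    rcases hv i with h | h <;> norm_num [h]
  have hreal : (2 * {i | v i = 1}.ncard : ℝ) = Fintype.card ι := by
    rw [Set.ncard_eq_toFinset_card', Set.toFinset_ofPred]
    rw [Finset.sum_congr rfl fun i _ => hv_ite i, Finset.sum_sub_distrib, ← Finset.mul_sum,
      Finset.sum_boole] at hsum
    simpa [sub_eq_zero] using hsum
  exact_mod_cast hreal

lemma two_mul_ncard_eq_neg_one_of_sum_eq_zero {ι : Type*} [Fintype ι] {v : ι → ℝ}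
    (hv : ∀ i, v i = 1 ∨ v i = -1) (hsum : ∑ i, v i = 0) :
    2 * {i | v i = -1}.ncard = Fintype.card ι := by
  have hneg : ∀ i, -v i = 1 ∨ -v i = -1 := fun i => by
    rcases hv i with h | h <;> simp [h]
  simpa [neg_eq_iff_eq_neg] using
    two_mul_ncard_eq_one_of_sum_eq_zero hneg (by rw [Finset.sum_neg_distrib, hsum, neg_zero])

section FmatStructure

variable (b : Bool) (k : ℕ)

lemma Fmat_row_of_lt (i : Fin (2 ^ (k + 1))) (hi : (i : ℕ) < 2 ^ k) :
    Fmat b k i = Pi.single ⟨i, hi⟩ (if b then -1 else 1) := by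
  ext j
  cases b <;> simp [Fmat, Smat, Amat, hi, Pi.single_apply, Fin.ext_iff, eq_comm]

lemma Fmat_row_of_le (i : Fin (2 ^ (k + 1))) (hi : 2 ^ k ≤ (i : ℕ)) :
    Fmat b k i = Pi.single ⟨2 ^ (k + 1) - 1 - i, by omega⟩ 1 := by
  ext j
  have hreflect : (i : ℕ) + j = 2 ^ (k + 1) - 1 ↔ (j : ℕ) = 2 ^ (k + 1) - 1 - i := by omega
  cases b <;> simp [Fmat, Smat, Amat, Nat.not_lt.mpr hi, Pi.single_apply, Fin.ext_iff, hreflect]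

lemma Fmat_apply (i : Fin (2 ^ (k + 1))) (j : Fin (2 ^ k)) :
    Fmat b k i j = (if i = ⟨j, by omega⟩ then (if b then -1 else 1) else 0) +
      (if i = ⟨2 ^ (k + 1) - 1 - j, by omega⟩ then 1 else 0) := by
  have hi₂ := i.isLt
  by_cases hi : (i : ℕ) < 2 ^ k
  · rw [Fmat_row_of_lt b k i hi]
    have hij : (i : ℕ) ≠ 2 ^ (k + 1) - 1 - j := by omega
    simp [Pi.single_apply, Fin.ext_iff, eq_comm, hij]
  · rw [Fmat_row_of_le b k i (by omega)]
    have hij : (i : ℕ) ≠ j := by omega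
    have hreflect : (j : ℕ) = 2 ^ (k + 1) - 1 - i ↔ (i : ℕ) = 2 ^ (k + 1) - 1 - j := by omega
    simp [Pi.single_apply, Fin.ext_iff, hij, hreflect]

lemma sum_Fmat_col (j : Fin (2 ^ k)) : ∑ i, Fmat b k i j = (if b then -1 else 1) + 1 := by
  simp only [Fmat_apply, Finset.sum_add_distrib, Finset.sum_ite_eq', Finset.mem_univ, if_true]

lemma Fmat_mulVec_apply_eq_one_or_neg_one {w : Fin (2 ^ k) → ℝ}
    (hw : ∀ j, w j = 1 ∨ w j = -1) (i : Fin (2 ^ (k + 1))) :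
    (Fmat b k *ᵥ w) i = 1 ∨ (Fmat b k *ᵥ w) i = -1 := by
  by_cases hi : (i : ℕ) < 2 ^ k
  · rw [mulVec, Fmat_row_of_lt b k i hi, single_dotProduct]
    rcases hw ⟨i, hi⟩ with h | h <;> cases b <;> simp [h]
  · rw [mulVec, Fmat_row_of_le b k i (by omega), single_dotProduct, one_mul]
    exact hw _

end FmatStructure

lemma prodVec_succ (n : ℕ) (c : Fin (n + 1) → Bool) :
    prodVec (n + 1) c = Fmat (c (Fin.last n)) n *ᵥ prodVec n (fun i => c i.castSucc) :=
  rfl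

lemma prodVec_apply_eq_one_or_neg_one (n : ℕ) (c : Fin n → Bool) (i : Fin (2 ^ n)) :
    prodVec n c i = 1 ∨ prodVec n c i = -1 := by
  induction n with
  | zero => exact Or.inl rfl
  | succ n ih =>
    rw [prodVec_succ]
    exact Fmat_mulVec_apply_eq_one_or_neg_one _ n (ih _) i

lemma sum_prodVec_eq_zero (n : ℕ) (c : Fin n → Bool) (hc : ∃ i, c i = true) :
    ∑ i, prodVec n c i = 0 := by
  induction n with
  | zero => exact hc.elim fun i _ => i.elim0
  | succ n ih =>
    rw [prodVec_succ, sum_mulVec_of_sum_col_eq _ (sum_Fmat_col _ n)]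
    obtain ⟨i, hi⟩ := hc
    cases hlast : c (Fin.last n)
    · obtain ⟨i', rfl⟩ : ∃ i' : Fin n, i'.castSucc = i :=
        Fin.exists_castSucc_eq.mpr fun h => by simp_all
      rw [ih _ ⟨i', hi⟩, mul_zero]
    · norm_num

/-- Proposition 1, part 1: every element of SA(n) other than
S⁽ⁿ⁾⋯S⁽¹⁾ has exactly 2^(n−1) entries equal to −1 and 2^(n−1) entries equal to 1. -/
theorem stmt1 (n : ℕ) (hn : 1 ≤ n) (v : Fin (2 ^ n) → ℝ) (hv : v ∈ SA n)
    (hne : v ≠ prodVec n (fun _ => false)) :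
    {i : Fin (2 ^ n) | v i = -1}.ncard = 2 ^ (n - 1) ∧
    {i : Fin (2 ^ n) | v i = 1}.ncard = 2 ^ (n - 1) := by
  obtain ⟨c, rfl⟩ := hv
  have hc : ∃ i, c i = true := by
    by_contra! h
    exact hne (congrArg _ (funext fun i => Bool.eq_false_iff.mpr (h i)))
  have hpm := prodVec_apply_eq_one_or_neg_one n c
  have hsum := sum_prodVec_eq_zero n c hc
  have hcard : Fintype.card (Fin (2 ^ n)) = 2 * 2 ^ (n - 1) := by
    rw [Fintype.card_fin, ← pow_succ', Nat.sub_add_cancel hn]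
  have h₁ := two_mul_ncard_eq_neg_one_of_sum_eq_zero hpm hsum
  have h₂ := two_mul_ncard_eq_one_of_sum_eq_zero hpm hsum
  omega
end

section
/- (Proposition 1, part 2, closure) For every n ≥ 1, if v and w belong to SA(n), then their Hadamard (componentwise) product v ∘ w also belongs to SA(n). -/
lemma fmat_mulVec (b : Bool) (k : ℕ) (x : Fin (2 ^ k) → ℝ) (i : Fin (2 ^ (k + 1))) :
    (Fmat b k).mulVec x i =
      if h : (i : ℕ) < 2 ^ k then (if b then -1 else 1) * x ⟨i, h⟩
      else x ⟨2 ^ (k + 1) - 1 - (i : ℕ), by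
        have := i.isLt; have : (2:ℕ) ^ (k+1) = 2 * 2 ^ k := by ring
        omega⟩ := by
  have hpow : (2:ℕ) ^ (k+1) = 2 * 2 ^ k := by ring
  unfold Fmat Amat Smat
  by_cases h : (i : ℕ) < 2 ^ k
  · rw [dif_pos h]
    cases b <;>
    · simp only [Matrix.mulVec, dotProduct, if_true, if_false,
        Bool.false_eq_true, Matrix.of_apply]
      rw [Finset.sum_eq_single (⟨(i:ℕ), h⟩ : Fin (2 ^ k))]
      · simp [h]
      · intro j _ hj
        have : (i : ℕ) ≠ (j : ℕ) := fun he => hj (by simp [Fin.ext_iff, ← he])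
        simp [h, this]
      · simp
  · rw [dif_neg h]
    have hj : 2 ^ (k + 1) - 1 - (i : ℕ) < 2 ^ k := by have := i.isLt; omega
    have hsum : (i : ℕ) + (2 ^ (k + 1) - 1 - (i : ℕ)) = 2 ^ (k + 1) - 1 := by
      have := i.isLt; omega
    cases b <;>
    · simp only [Matrix.mulVec, dotProduct, if_true, if_false,
        Bool.false_eq_true, Matrix.of_apply]
      rw [Finset.sum_eq_single (⟨2 ^ (k + 1) - 1 - (i : ℕ), hj⟩ : Fin (2 ^ k))]
      · simp [h, hsum]
      · intro j _ hjne
        have : (i : ℕ) + (j : ℕ) ≠ 2 ^ (k + 1) - 1 := by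
          intro he
          apply hjne
          have := i.isLt
          apply Fin.ext
          show (j:ℕ) = 2 ^ (k + 1) - 1 - (i:ℕ)
          omega
        simp [h, this]
      · simp

lemma prodVec_mul (n : ℕ) (c d : Fin n → Bool) :
    prodVec n c * prodVec n d = prodVec n (fun i => xor (c i) (d i)) := by
  induction n with
  | zero => funext i; simp [prodVec]
  | succ n ih =>
    funext i
    simp only [prodVec, Pi.mul_apply, fmat_mulVec]
    split
    · rw [show (fun i => xor (c i.castSucc) (d i.castSucc)) =
        (fun i : Fin n => (fun j => xor (c j) (d j)) i.castSucc) from rfl] at *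
      rw [← ih, Pi.mul_apply]
      cases c (Fin.last n) <;> cases d (Fin.last n) <;> simp <;> ring
    · rw [show (fun i => xor (c i.castSucc) (d i.castSucc)) =
        (fun i : Fin n => (fun j => xor (c j) (d j)) i.castSucc) from rfl] at *
      rw [← ih, Pi.mul_apply]

/-- Proposition 1, part 2, closure: SA(n) is closed under the
Hadamard (componentwise) product. -/
theorem stmt4 (n : ℕ) (hn : 1 ≤ n) (v w : Fin (2 ^ n) → ℝ)
    (hv : v ∈ SA n) (hw : w ∈ SA n) : v * w ∈ SA n := by
  obtain ⟨c, rfl⟩ := hv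
  obtain ⟨d, rfl⟩ := hw
  exact ⟨fun i => xor (c i) (d i), prodVec_mul n c d⟩
end

section
/- (Gray code enumeration, from the proof of Proposition 2) For n ≥ 1, let B be the 2^n × n matrix whose i-th column is B_i = F⁽ⁿ⁾F⁽ⁿ⁻¹⁾⋯F⁽¹⁾ with F⁽ⁱ⁾ = A⁽ⁱ⁾ and F⁽ʲ⁾ = S⁽ʲ⁾ for all j ≠ i. Then the map sending each row index j ∈ {1, …, 2^n} to the j-th row of B is a bijection onto {−1, 1}^n; that is, the rows of B enumerate all 2^n strings of length n in the alphabet {−1, 1} without repetition. -/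
/-!
The last factor of every column of `B⁽ⁿ⁺¹⁾` is `S⁽ⁿ⁺¹⁾`, except in the last column, where it is
`A⁽ⁿ⁺¹⁾` applied to the all-ones vector. Both matrices fold the rows of `Fin (2ⁿ⁺¹)` onto
`Fin (2ⁿ)` (forwards on the top half, backwards on the bottom half), `A` adding the sign `-1` on
the top half. Hence row `j` of `B⁽ⁿ⁺¹⁾` is row `fold j` of `B⁽ⁿ⁾` followed by the sign of the half
containing `j`. As `j ↦ (fold j, sign j)` is a bijection onto `Fin (2ⁿ) × {-1, 1}`, induction on
`n` shows that the rows enumerate `{-1, 1}ⁿ`.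
-/

open Matrix

/-- Row `i` of `S⁽ᵏ⁺¹⁾` has its `1` in column `foldIndex k i`: the top half of the rows reads
the columns forwards, the bottom half backwards. -/
def foldIndex (k : ℕ) (i : Fin (2 ^ (k + 1))) : Fin (2 ^ k) :=
  if h : (i : ℕ) < 2 ^ k then ⟨i, h⟩
  else ⟨2 ^ (k + 1) - 1 - i, by have := i.2; rw [pow_succ] at *; omega⟩

def halfSign (k : ℕ) (i : Fin (2 ^ (k + 1))) : ℝ :=
  if (i : ℕ) < 2 ^ k then -1 else 1

lemma Smat_apply (k : ℕ) (i : Fin (2 ^ (k + 1))) (j : Fin (2 ^ k)) :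
    Smat k i j = if foldIndex k i = j then 1 else 0 := by
  have := i.2
  have := pow_succ 2 k
  simp only [Smat, foldIndex, Matrix.of_apply]
  split_ifs <;> simp_all [Fin.ext_iff] <;> omega

lemma Amat_apply (k : ℕ) (i : Fin (2 ^ (k + 1))) (j : Fin (2 ^ k)) :
    Amat k i j = halfSign k i * Smat k i j := by
  simp only [Amat, Smat, halfSign, Matrix.of_apply]
  split_ifs <;> norm_num

lemma Smat_mulVec_apply (k : ℕ) (v : Fin (2 ^ k) → ℝ) (i : Fin (2 ^ (k + 1))) :
    (Smat k *ᵥ v) i = v (foldIndex k i) := by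
  simp [Matrix.mulVec, dotProduct, Smat_apply]

lemma Amat_mulVec_apply (k : ℕ) (v : Fin (2 ^ k) → ℝ) (i : Fin (2 ^ (k + 1))) :
    (Amat k *ᵥ v) i = halfSign k i * v (foldIndex k i) := by
  simp only [Matrix.mulVec, dotProduct, Amat_apply, mul_assoc, ← Finset.mul_sum]
  rw [← dotProduct, ← Matrix.mulVec, Smat_mulVec_apply]

lemma prodVec_const_false (n : ℕ) : prodVec n (fun _ => false) = fun _ => 1 := by
  induction n with
  | zero => rfl
  | succ n ih =>
    funext j
    simp only [prodVec, Fmat, Bool.false_eq_true, if_false, ih, Smat_mulVec_apply]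

noncomputable def grayRow (n : ℕ) (j : Fin (2 ^ n)) (i : Fin n) : ℝ :=
  prodVec n (fun l => decide (l = i)) j

lemma grayRow_succ (n : ℕ) (j : Fin (2 ^ (n + 1))) :
    grayRow (n + 1) j = Fin.snoc (grayRow n (foldIndex n j)) (halfSign n j) := by
  funext i
  induction i using Fin.lastCases with
  | last =>
    have hinit : (fun l : Fin n => decide (l.castSucc = Fin.last n)) = fun _ => false := by
      funext l
      simp [(Fin.castSucc_lt_last l).ne]
    simp only [grayRow, prodVec, Fmat, decide_true, if_true, Fin.snoc_last, hinit,
      prodVec_const_false, Amat_mulVec_apply, mul_one]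
  | cast i =>
    simp [grayRow, prodVec, Fmat, (Fin.castSucc_lt_last i).ne', Smat_mulVec_apply]

lemma foldIndex_halfSign_injective (k : ℕ) :
    Function.Injective fun j : Fin (2 ^ (k + 1)) => (foldIndex k j, halfSign k j) := by
  intro j j' h
  simp only [Prod.mk.injEq, foldIndex, halfSign] at h
  obtain ⟨hfold, hsign⟩ := h
  have := j.2; have := j'.2; have := pow_succ 2 k
  split_ifs at hfold hsign <;> simp only [Fin.ext_iff] at hfold ⊢ <;> norm_num at hsign <;> omega

lemma exists_foldIndex_halfSign (k : ℕ) (j : Fin (2 ^ k)) {s : ℝ} (hs : s = -1 ∨ s = 1) :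
    ∃ i, foldIndex k i = j ∧ halfSign k i = s := by
  have := j.2
  rcases hs with rfl | rfl
  · exact ⟨⟨j, by rw [pow_succ]; omega⟩, by simp [foldIndex, halfSign]⟩
  · refine ⟨⟨2 ^ (k + 1) - 1 - j, by omega⟩, ?_⟩
    have : ¬ 2 ^ (k + 1) - 1 - (j : ℕ) < 2 ^ k := by rw [pow_succ]; omega
    simp only [foldIndex, halfSign, dif_neg this, if_neg this, and_true]
    ext; simp only; rw [pow_succ] at *; omega

lemma grayRow_injective (n : ℕ) : Function.Injective (grayRow n) := by
  induction n with
  | zero =>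
    intro j j' _
    exact Fin.ext (by have := j.2; have := j'.2; simp only [pow_zero] at *; omega)
  | succ n ih =>
    intro j j' h
    rw [grayRow_succ, grayRow_succ] at h
    obtain ⟨hinit, hlast⟩ := Fin.snoc_injective2 h
    exact foldIndex_halfSign_injective n (Prod.ext (ih hinit) hlast)

lemma range_grayRow (n : ℕ) :
    Set.range (grayRow n) = {x : Fin n → ℝ | ∀ i, x i = -1 ∨ x i = 1} := by
  induction n with
  | zero =>
    ext x
    simp [Subsingleton.elim x (grayRow 0 ⟨0, by simp⟩)]
  | succ n ih =>
    ext x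
    simp only [Set.mem_range, Set.mem_ofPred_eq, Fin.forall_fin_succ']
    constructor
    · rintro ⟨j, rfl⟩
      have hrow : grayRow n (foldIndex n j) ∈ Set.range (grayRow n) := ⟨_, rfl⟩
      rw [ih] at hrow
      simp only [grayRow_succ, Fin.snoc_castSucc, Fin.snoc_last, halfSign]
      exact ⟨hrow, by split_ifs <;> simp⟩
    · rintro ⟨hinit, hlast⟩
      obtain ⟨j', hj'⟩ : Fin.init x ∈ Set.range (grayRow n) := by rw [ih]; exact hinit
      obtain ⟨j, hfold, hsign⟩ := exists_foldIndex_halfSign n j' hlast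
      exact ⟨j, by rw [grayRow_succ, hfold, hj', hsign, Fin.snoc_init_self]⟩

theorem stmt10_general (n : ℕ) :
    Function.Injective
      (fun (j : Fin (2 ^ n)) (i : Fin n) => prodVec n (fun l => decide (l = i)) j) ∧
    Set.range
      (fun (j : Fin (2 ^ n)) (i : Fin n) => prodVec n (fun l => decide (l = i)) j)
      = {x : Fin n → ℝ | ∀ i, x i = -1 ∨ x i = 1} :=
  ⟨grayRow_injective n, range_grayRow n⟩

/-- Gray code enumeration: the rows of the matrix B (whose i-th
column is the product with A in position i and S elsewhere) enumerate all 2^n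
strings in the alphabet {−1, 1} without repetition. -/
theorem stmt10 (n : ℕ) (hn : 1 ≤ n) :
    Function.Injective
      (fun (j : Fin (2 ^ n)) (i : Fin n) => prodVec n (fun l => decide (l = i)) j) ∧
    Set.range
      (fun (j : Fin (2 ^ n)) (i : Fin n) => prodVec n (fun l => decide (l = i)) j)
      = {x : Fin n → ℝ | ∀ i, x i = -1 ∨ x i = 1} :=
  stmt10_general n
end

section
/- (Proposition 3) For every n ≥ 1, the space of real solutions x ∈ ℝ^(2^n) of the linear system M x = 0 has dimension 2^n − n(n+1)/2; equivalently, the matrix M has rank n(n+1)/2 (full row rank). -/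
open Matrix


/-- The sign value of a Boolean: `true ↦ 1`, `false ↦ -1`, encoding {−1,1}. -/
noncomputable def sgn (b : Bool) : ℝ := if b then 1 else -1

/-- The (n(n+1)/2) × 2^n matrix M: rows are indexed by pairs (k, l) with k ≤ l,
columns by elements z of {−1,1}^n (encoded as `Fin n → Bool`), and the entry is
m(z)_{kl}, i.e. z_k if k = l and z_k · z_l otherwise. -/
noncomputable def Mmat (n : ℕ) :
    Matrix {p : Fin n × Fin n // p.1 ≤ p.2} (Fin n → Bool) ℝ :=
  Matrix.of fun p z =>
    if p.1.1 = p.1.2 then sgn (z p.1.1) else sgn (z p.1.1) * sgn (z p.1.2)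

lemma sgn_sq (b : Bool) : sgn b * sgn b = 1 := by cases b <;> simp [sgn]

lemma sum_sgn : ∑ b : Bool, sgn b = 0 := by simp [sgn]

/-- The entry of `Mmat` as a product over all indices of indicator factors. -/
lemma Mmat_eq_prod (n : ℕ) (p : {p : Fin n × Fin n // p.1 ≤ p.2}) (z : Fin n → Bool) :
    Mmat n p z = ∏ i : Fin n, (if i = p.1.1 ∨ i = p.1.2 then sgn (z i) else 1) := by
  classical
  rcases p with ⟨⟨k, l⟩, hkl⟩
  simp only [Mmat, Matrix.of_apply]
  by_cases h : k = l
  · subst h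
    simp only [if_pos rfl, or_self]
    rw [Finset.prod_eq_single k (by intro b _ hb; simp [hb]) (by simp)]
    simp
  · rw [if_neg h]
    have : ∀ i : Fin n, (if i = k ∨ i = l then sgn (z i) else 1)
        = (if i = k then sgn (z i) else 1) * (if i = l then sgn (z i) else 1) := by
      intro i
      by_cases h1 : i = k <;> by_cases h2 : i = l <;> simp_all
    rw [Finset.prod_congr rfl (fun i _ => this i), Finset.prod_mul_distrib]
    rw [Finset.prod_eq_single k (by intro b _ hb; simp [hb]) (by simp),
        Finset.prod_eq_single l (by intro b _ hb; simp [hb]) (by simp)]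
    simp

lemma pair_inj {n : ℕ} (p q : {p : Fin n × Fin n // p.1 ≤ p.2})
    (h : ∀ i : Fin n, (i = p.1.1 ∨ i = p.1.2) ↔ (i = q.1.1 ∨ i = q.1.2)) : p = q := by
  rcases p with ⟨⟨a, b⟩, hab⟩
  rcases q with ⟨⟨c, d⟩, hcd⟩
  simp only at h hab hcd
  have h1 := (h a).mp (Or.inl rfl)
  have h2 := (h b).mp (Or.inr rfl)
  have h3 := (h c).mpr (Or.inl rfl)
  have h4 := (h d).mpr (Or.inr rfl)
  have hab' : (a : ℕ) ≤ b := hab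
  have hcd' : (c : ℕ) ≤ d := hcd
  have e1 : (a : ℕ) = c ∨ (a : ℕ) = d := by rcases h1 with h | h <;> [left; right] <;> rw [h]
  have e2 : (b : ℕ) = c ∨ (b : ℕ) = d := by rcases h2 with h | h <;> [left; right] <;> rw [h]
  have e3 : (c : ℕ) = a ∨ (c : ℕ) = b := by rcases h3 with h | h <;> [left; right] <;> rw [h]
  have e4 : (d : ℕ) = a ∨ (d : ℕ) = b := by rcases h4 with h | h <;> [left; right] <;> rw [h]
  have : (a : ℕ) = c ∧ (b : ℕ) = d := by omega
  simp only [Subtype.mk.injEq, Prod.mk.injEq]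
  exact ⟨Fin.ext this.1, Fin.ext this.2⟩

/-- M times its transpose is 2^n times the identity. -/
lemma Mmat_mul_transpose (n : ℕ) :
    Mmat n * (Mmat n)ᵀ = ((2 : ℝ) ^ n) • 1 := by
  classical
  ext p q
  rw [Matrix.mul_apply]
  simp only [Matrix.transpose_apply]
  have key : ∀ z : Fin n → Bool, Mmat n p z * Mmat n q z
      = ∏ i : Fin n, ((if i = p.1.1 ∨ i = p.1.2 then sgn (z i) else 1)
          * (if i = q.1.1 ∨ i = q.1.2 then sgn (z i) else 1)) := by
    intro z
    rw [Mmat_eq_prod, Mmat_eq_prod, ← Finset.prod_mul_distrib]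
  simp only [key]
  rw [← Fintype.prod_sum (fun i b => (if i = p.1.1 ∨ i = p.1.2 then sgn b else 1)
          * (if i = q.1.1 ∨ i = q.1.2 then sgn b else 1))]
  have factor : ∀ i : Fin n,
      (∑ b : Bool, (if i = p.1.1 ∨ i = p.1.2 then sgn b else 1)
          * (if i = q.1.1 ∨ i = q.1.2 then sgn b else 1))
      = if ((i = p.1.1 ∨ i = p.1.2) ↔ (i = q.1.1 ∨ i = q.1.2)) then 2 else 0 := by
    intro i
    by_cases h1 : i = p.1.1 ∨ i = p.1.2 <;> by_cases h2 : i = q.1.1 ∨ i = q.1.2 <;>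
      simp [h1, h2, sgn_sq, sum_sgn] <;> norm_num [sgn] <;> tauto
  rw [Finset.prod_congr rfl (fun i _ => factor i)]
  by_cases hpq : p = q
  · subst hpq
    simp [Matrix.one_apply]
  · rw [Matrix.smul_apply, Matrix.one_apply_ne hpq, smul_zero]
    have : ¬ ∀ i : Fin n, (i = p.1.1 ∨ i = p.1.2) ↔ (i = q.1.1 ∨ i = q.1.2) := by
      intro h; exact hpq (pair_inj p q h)
    obtain ⟨i, hi⟩ := not_forall.mp this
    exact Finset.prod_eq_zero (Finset.mem_univ i) (by rw [if_neg hi])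

lemma card_pairs (n : ℕ) :
    Fintype.card {p : Fin n × Fin n // p.1 ≤ p.2} = n * (n + 1) / 2 := by
  classical
  have e : {p : Fin n × Fin n // p.1 ≤ p.2} ≃ Σ j : Fin n, Fin (j.val + 1) :=
    { toFun := fun p => ⟨p.1.2, ⟨p.1.1.val, Nat.lt_succ_of_le p.2⟩⟩
      invFun := fun x => ⟨(⟨x.2.val, lt_of_lt_of_le x.2.isLt (Nat.succ_le_of_lt x.1.isLt)⟩,
        x.1), Nat.le_of_lt_succ x.2.isLt⟩
      left_inv := fun p => rfl
      right_inv := fun x => rfl }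
  rw [Fintype.card_congr e, Fintype.card_sigma]
  simp only [Fintype.card_fin]
  rw [Fin.sum_univ_eq_sum_range (fun j => j + 1) n]
  have h1 : ∑ i ∈ Finset.range n, (i + 1) = ∑ i ∈ Finset.range (n + 1), i := by
    rw [Finset.sum_range_succ' (fun i => i) n]
    simp
  rw [h1, Finset.sum_range_id]
  simp [Nat.mul_comm]

/-- Proposition 3: the solution space of M x = 0 has dimension
2^n − n(n+1)/2; equivalently M has full row rank n(n+1)/2. -/
theorem stmt13 (n : ℕ) (hn : 1 ≤ n) :
    Module.finrank ℝ (LinearMap.ker (Mmat n).mulVecLin)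
      = 2 ^ n - n * (n + 1) / 2 ∧
    (Mmat n).rank = n * (n + 1) / 2 := by
  classical
  have hrank : (Mmat n).rank = n * (n + 1) / 2 := by
    rw [← Matrix.rank_self_mul_transpose, Mmat_mul_transpose]
    have hu : IsUnit (((2 : ℝ) ^ n) • (1 : Matrix {p : Fin n × Fin n // p.1 ≤ p.2} {p : Fin n × Fin n // p.1 ≤ p.2} ℝ)) := by
      rw [Matrix.isUnit_iff_isUnit_det, Matrix.det_smul, Matrix.det_one, mul_one]
      exact isUnit_iff_ne_zero.mpr (by positivity)
    rw [Matrix.rank_of_isUnit _ hu, card_pairs]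
  refine ⟨?_, hrank⟩
  have h := LinearMap.finrank_range_add_finrank_ker (Mmat n).mulVecLin
  have hdom : Module.finrank ℝ ((Fin n → Bool) → ℝ) = 2 ^ n := by
    rw [Module.finrank_fintype_fun_eq_card]
    simp
  rw [hdom] at h
  have : (Mmat n).rank = Module.finrank ℝ (LinearMap.range (Mmat n).mulVecLin) := rfl
  omega
end
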